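/- arXiv:2203.17216 — 3 statements merged into one kernel-verified Lean document; each statement's English description precedes it below -/
import Mathlib

section
/- Let h(x) = gcd(a(x), b(x), x^ℓ - 1) in F_q[x]. Then the rank of the ℓ×2ℓ block matrix H_X = (a(P) | b(P)) equals ℓ - deg h(x). -/
open Polynomial Matrix
open scoped Classical

/-- The `ℓ × ℓ` cyclic permutation matrix `P` with `P eᵢ = e_{i+1 mod ℓ}`. -/
def cyclicP (F : Type*) [Semiring F] (n : ℕ) [NeZero n] : Matrix (Fin n) (Fin n) F :=
  Matrix.of fun i j => if i = j + 1 then 1 else 0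

/-! In the basis `1, x, …, x^(ℓ-1)` of `R = F[x]/(x^ℓ - 1)`, `P` is the matrix of multiplication
by `x`, so `p(P)` is the matrix of multiplication by `p`. Hence the column space of
`(a(P) | b(P))` is the ideal `(a, b)` of `R`, which is `(h)` since `F[x]` is a principal ideal
domain, and `(h)` has codimension `dim F[x]/(h) = deg h` in `R`. -/

theorem Matrix.range_mulVecLin_fromCols {R m n₁ n₂ : Type*} [CommSemiring R]
    [Fintype n₁] [Fintype n₂] (A : Matrix m n₁ R) (B : Matrix m n₂ R) :
    LinearMap.range (fromCols A B).mulVecLin =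
      LinearMap.range A.mulVecLin ⊔ LinearMap.range B.mulVecLin := by
  apply le_antisymm
  · rintro _ ⟨v, rfl⟩
    rw [mulVecLin_apply, fromCols_mulVec]
    exact Submodule.add_mem_sup ⟨_, rfl⟩ ⟨_, rfl⟩
  · refine sup_le ?_ ?_
    · rintro _ ⟨v, rfl⟩
      exact ⟨Sum.elim v 0, by simp⟩
    · rintro _ ⟨v, rfl⟩
      exact ⟨Sum.elim 0 v, by simp⟩

theorem LinearMap.range_mulLeft_eq_span {R S : Type*} [CommSemiring R] [CommSemiring S]
    [Algebra R S] (x : S) :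
    LinearMap.range (LinearMap.mulLeft R x) = (Ideal.span {x}).restrictScalars R := by
  ext y
  simp [Ideal.mem_span_singleton', mul_comm]

theorem Algebra.range_mulVecLin_leftMulMatrix {R S ι : Type*} [CommRing R] [CommRing S]
    [Algebra R S] [Fintype ι] [DecidableEq ι] (b : Module.Basis ι R S) (x : S) :
    LinearMap.range (leftMulMatrix b x).mulVecLin =
      ((Ideal.span {x}).restrictScalars R).map (b.equivFun : S →ₗ[R] ι → R) := by
  have hconj : (leftMulMatrix b x).mulVecLin =
      b.equivFun.toLinearMap ∘ₗ LinearMap.mulLeft R x ∘ₗ b.equivFun.symm.toLinearMap := by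
    refine LinearMap.ext fun v => ?_
    obtain ⟨y, rfl⟩ := b.equivFun.surjective v
    simp [leftMulMatrix_mulVec_repr]
  rw [hconj, LinearMap.range_comp, LinearMap.range_comp_of_range_eq_top _ (LinearEquiv.range _),
    LinearMap.range_mulLeft_eq_span]

theorem Polynomial.natDegree_X_pow_sub_one {K : Type*} [Field K] (n : ℕ) :
    ((X : K[X]) ^ n - 1).natDegree = n := by
  rw [← C_1, natDegree_X_pow_sub_C]

theorem Polynomial.X_pow_sub_one_ne_zero {K : Type*} [Field K] {n : ℕ} (hn : 0 < n) :
    (X : K[X]) ^ n - 1 ≠ 0 := by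
  rw [← C_1]
  exact X_pow_sub_C_ne_zero hn 1

theorem AdjoinRoot.root_X_pow_sub_one_pow {R : Type*} [CommRing R] (n : ℕ) :
    root ((X : R[X]) ^ n - 1) ^ n = 1 := by
  have h := aeval_eq (f := (X : R[X]) ^ n - 1) ((X : R[X]) ^ n - 1)
  rw [mk_self] at h
  simpa [sub_eq_zero] using h

theorem AdjoinRoot.span_mk_pair_eq_span_mk_gcd {K : Type*} [Field K] (a b m : K[X]) :
    Ideal.span {mk m a, mk m b} =
      Ideal.span {mk m (EuclideanDomain.gcd (EuclideanDomain.gcd a b) m)} := by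
  have hm : (Ideal.span {m}).map (mk m) = ⊥ := by simp [Ideal.map_span, mk_self]
  calc Ideal.span {mk m a, mk m b}
      = (Ideal.span {a, b}).map (mk m) := by rw [Ideal.map_span, Set.image_pair]
    _ = (Ideal.span {EuclideanDomain.gcd a b} ⊔ Ideal.span {m}).map (mk m) := by
      rw [Ideal.map_sup, hm, sup_bot_eq, EuclideanDomain.span_gcd]
    _ = (Ideal.span {EuclideanDomain.gcd (EuclideanDomain.gcd a b) m}).map (mk m) := by
      rw [← Ideal.span_insert, EuclideanDomain.span_gcd]
    _ = _ := by rw [Ideal.map_span, Set.image_singleton]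

theorem AdjoinRoot.finrank_span_mk_of_dvd {K : Type*} [Field K] {m g : K[X]} (hm : m ≠ 0)
    (hg : g ∣ m) :
    Module.finrank K ((Ideal.span {mk m g}).restrictScalars K) = m.natDegree - g.natDegree := by
  have := (powerBasis hm).finite
  have hquot : Module.finrank K (AdjoinRoot m ⧸ Ideal.span {mk m g}) = g.natDegree := by
    have hspan : Ideal.span {mk m g} =
        (Ideal.span {g}).map (Ideal.Quotient.mkₐ K (Ideal.span {m})) := by
      rw [Ideal.map_span, Set.image_singleton]
      rfl
    rw [hspan]
    exact (DoubleQuot.quotQuotEquivQuotOfLEₐ K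
      (Ideal.span_singleton_le_span_singleton.2 hg)).toLinearEquiv.finrank_eq.trans
      finrank_quotient_span_eq_natDegree
  have hsum := ((Ideal.span {mk m g}).restrictScalars K).finrank_quotient_add_finrank
  rw [(Submodule.Quotient.restrictScalarsEquiv K _).finrank_eq, hquot,
    (powerBasis hm).finrank, powerBasis_dim] at hsum
  omega

section Cyclic

variable (F : Type*) [Field F] (n : ℕ) [NeZero n]

noncomputable def cyclicBasis : Module.Basis (Fin n) F (AdjoinRoot ((X : F[X]) ^ n - 1)) :=
  (AdjoinRoot.powerBasis (X_pow_sub_one_ne_zero (NeZero.pos n))).basis.reindex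
    (finCongr (natDegree_X_pow_sub_one n))

theorem cyclicBasis_apply (j : Fin n) : cyclicBasis F n j = AdjoinRoot.root _ ^ (j : ℕ) := by
  rw [cyclicBasis, Module.Basis.reindex_apply, PowerBasis.basis_eq_pow]
  rfl

theorem leftMulMatrix_cyclicBasis_root :
    Algebra.leftMulMatrix (cyclicBasis F n) (AdjoinRoot.root _) = cyclicP F n := by
  ext i j
  have hmul : AdjoinRoot.root _ * cyclicBasis F n j = cyclicBasis F n (j + 1) := by
    rw [cyclicBasis_apply, cyclicBasis_apply, ← pow_succ', Fin.val_add, Fin.val_one',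
      Nat.add_mod_mod, ← pow_eq_pow_mod _ (AdjoinRoot.root_X_pow_sub_one_pow n)]
  rw [Algebra.leftMulMatrix_eq_repr_mul, hmul, Module.Basis.repr_self, Finsupp.single_apply]
  simp [cyclicP, eq_comm]

theorem aeval_cyclicP (p : F[X]) :
    aeval (cyclicP F n) p = Algebra.leftMulMatrix (cyclicBasis F n) (AdjoinRoot.mk _ p) := by
  rw [← leftMulMatrix_cyclicBasis_root, aeval_algHom_apply, AdjoinRoot.aeval_eq]

end Cyclic

theorem stmt_4_general (F : Type*) [Field F] (ℓ : ℕ) [NeZero ℓ] (a b : Polynomial F) :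
    (Matrix.fromCols (Polynomial.aeval (cyclicP F ℓ) a)
        (Polynomial.aeval (cyclicP F ℓ) b)).rank =
      ℓ - (EuclideanDomain.gcd (EuclideanDomain.gcd a b) ((X : Polynomial F) ^ ℓ - 1)).natDegree := by
  rw [Matrix.rank, range_mulVecLin_fromCols, aeval_cyclicP, aeval_cyclicP,
    Algebra.range_mulVecLin_leftMulMatrix, Algebra.range_mulVecLin_leftMulMatrix,
    ← Submodule.map_sup, ← Submodule.restrictScalars_sup, ← Ideal.span_insert,
    AdjoinRoot.span_mk_pair_eq_span_mk_gcd, LinearEquiv.finrank_map_eq,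
    AdjoinRoot.finrank_span_mk_of_dvd (X_pow_sub_one_ne_zero (NeZero.pos ℓ))
      (EuclideanDomain.gcd_dvd_right _ _), natDegree_X_pow_sub_one]

/-- With `h(x) = gcd(a(x), b(x), x^ℓ - 1)`, the rank of `H_X = (a(P) | b(P))`
equals `ℓ - deg h`. -/
theorem stmt_4 (F : Type*) [Field F] [Fintype F] (ℓ : ℕ) [NeZero ℓ] (a b : Polynomial F)
    (ha : a.natDegree < ℓ) (hb : b.natDegree < ℓ) :
    (Matrix.fromCols (Polynomial.aeval (cyclicP F ℓ) a)
        (Polynomial.aeval (cyclicP F ℓ) b)).rank =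
      ℓ - (EuclideanDomain.gcd (EuclideanDomain.gcd a b) ((X : Polynomial F) ^ ℓ - 1)).natDegree :=
  stmt_4_general F ℓ a b
end

section
/- For m coprime to ℓ, the substitution x ↦ x^m induces a ring automorphism of F_q[x]/(x^ℓ - 1); consequently the codes GB(a,b) and GB(a', b') with a'(x) = a(x^m) mod (x^ℓ-1) and b'(x) = b(x^m) mod (x^ℓ-1) have equal dimension and equal minimum distance. -/
open Polynomial Matrix

/-- Hamming weight of a vector. -/
noncomputable def hWt {n F : Type*} [Zero F] (c : n → F) : ℕ := Set.ncard {i | c i ≠ 0}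

/-- The X-check matrix `H_X = (a(P) | b(P))` of the GB code `GB(a,b)`. -/
noncomputable def GBHX (F : Type*) [Field F] (ℓ : ℕ) [NeZero ℓ] (a b : Polynomial F) :
    Matrix (Fin ℓ) (Fin ℓ ⊕ Fin ℓ) F :=
  Matrix.fromCols (Polynomial.aeval (cyclicP F ℓ) a) (Polynomial.aeval (cyclicP F ℓ) b)

/-- The Z-check matrix `H_Z = (b(P)ᵀ | -a(P)ᵀ)` of the GB code `GB(a,b)`. -/
noncomputable def GBHZ (F : Type*) [Field F] (ℓ : ℕ) [NeZero ℓ] (a b : Polynomial F) :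
    Matrix (Fin ℓ) (Fin ℓ ⊕ Fin ℓ) F :=
  Matrix.fromCols ((Polynomial.aeval (cyclicP F ℓ) b)ᵀ) (-(Polynomial.aeval (cyclicP F ℓ) a)ᵀ)

/-- Minimum distance of the CSS code with check matrices `H_X`, `H_Z`: the least Hamming
weight of a vector that satisfies all checks of one type but is not a linear combination
of the rows of the corresponding check matrix. -/
noncomputable def distCSS {F : Type*} [Field F] {q m1 m2 : Type*} [Fintype q]
    (HX : Matrix m1 q F) (HZ : Matrix m2 q F) : ℕ :=
  sInf ({w | ∃ c : q → F, HX.mulVec c = 0 ∧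
          c ∉ Submodule.span F (Set.range fun i => HZ i) ∧ w = hWt c} ∪
        {w | ∃ c : q → F, HZ.mulVec c = 0 ∧
          c ∉ Submodule.span F (Set.range fun i => HX i) ∧ w = hWt c})

/-- Number of logical qudits of the GB code `GB(a,b)`. -/
noncomputable def gbDim (F : Type*) [Field F] (ℓ : ℕ) [NeZero ℓ] (a b : Polynomial F) : ℕ :=
  2 * ℓ - (GBHX F ℓ a b).rank - (GBHZ F ℓ a b).rank

/-- Minimum distance of the GB code `GB(a,b)`. -/
noncomputable def gbDist (F : Type*) [Field F] (ℓ : ℕ) [NeZero ℓ] (a b : Polynomial F) : ℕ :=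
  distCSS (GBHX F ℓ a b) (GBHZ F ℓ a b)


/-!
Substituting `x ↦ x^m` corresponds, on circulants, to relabelling coordinates by `t ↦ m⁻¹ t`
(mod `ℓ`): the shift `P^m` is the shift `P` conjugated by this permutation. Hence
`a'(P) = a(P^m)` and `b'(P) = b(P^m)` are `a(P)` and `b(P)` with rows and columns permuted
simultaneously, so the check matrices of `GB(a', b')` are those of `GB(a, b)` with rows and
(blockwise) columns permuted. Such a relabelling preserves ranks, kernels, row spans and Hamming
weights, hence dimension and distance. On `F[x]/(x^ℓ - 1)`, where `x^ℓ = 1`, the substitution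
`x ↦ x^m` is inverted by `x ↦ x^m'` for any `m m' ≡ 1 (mod ℓ)`.
-/

namespace AdjoinRoot

variable {R : Type*} [CommRing R] (n : ℕ)

lemma root_X_pow_sub_one_pow_self : root (X ^ n - 1 : R[X]) ^ n = 1 := by
  rw [← sub_eq_zero, ← mk_X, ← map_pow, ← map_one (mk _), ← map_sub, mk_self]

noncomputable def powSubst (k : ℕ) :
    AdjoinRoot (X ^ n - 1 : R[X]) →ₐ[R] AdjoinRoot (X ^ n - 1 : R[X]) :=
  liftAlgHom _ (Algebra.ofId R _) (root _ ^ k) (by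
    rw [eval₂_sub, eval₂_X_pow, eval₂_one, ← pow_mul, mul_comm, pow_mul,
      root_X_pow_sub_one_pow_self, one_pow, sub_self])

lemma powSubst_root (k : ℕ) : powSubst n k (root (X ^ n - 1 : R[X])) = root _ ^ k :=
  liftAlgHom_root _ _ _ _

lemma powSubst_mk (k : ℕ) (p : R[X]) :
    powSubst n k (mk _ p) = mk _ (p.comp (X ^ k)) := by
  rw [← aeval_eq, ← aeval_eq, aeval_comp, aeval_X_pow, ← powSubst_root, aeval_algHom_apply]

lemma powSubst_comp_powSubst (k k' : ℕ) :
    (powSubst (R := R) n k').comp (powSubst n k) = powSubst n (k * k') :=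
  algHom_ext (by simp [powSubst_root, ← pow_mul, mul_comm])

lemma powSubst_eq_id_of_modEq_one {k : ℕ} (hk : k ≡ 1 [MOD n]) :
    powSubst (R := R) n k = AlgHom.id R _ :=
  algHom_ext <| by
    have hroot := root_X_pow_sub_one_pow_self (R := R) n
    rw [powSubst_root, AlgHom.id_apply, pow_eq_pow_mod k hroot, hk, ← pow_eq_pow_mod 1 hroot,
      pow_one]

noncomputable def powSubstEquiv {k k' : ℕ} (h : k * k' ≡ 1 [MOD n]) :
    AdjoinRoot (X ^ n - 1 : R[X]) ≃ₐ[R] AdjoinRoot (X ^ n - 1 : R[X]) :=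
  AlgEquiv.ofAlgHom (powSubst n k) (powSubst n k')
    (by rw [powSubst_comp_powSubst, powSubst_eq_id_of_modEq_one n (by rwa [mul_comm])])
    (by rw [powSubst_comp_powSubst, powSubst_eq_id_of_modEq_one n h])

end AdjoinRoot

lemma Nat.exists_mul_modEq_one_of_coprime {m n : ℕ} (hm : m.Coprime n) (hn : n ≠ 0) :
    ∃ m', m * m' ≡ 1 [MOD n] := by
  refine ⟨m ^ (n.totient - 1), ?_⟩
  have := Nat.ModEq.pow_totient hm
  rwa [← Nat.sub_add_cancel (Nat.totient_pos.mpr (Nat.pos_of_ne_zero hn)), pow_succ'] at this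

lemma Matrix.aeval_submatrix_equiv {R m n : Type*} [CommSemiring R] [Fintype m] [Fintype n]
    [DecidableEq m] [DecidableEq n] (A : Matrix n n R) (e : m ≃ n) (p : R[X]) :
    aeval (A.submatrix e e) p = (aeval A p).submatrix e e := by
  simpa using aeval_algHom_apply (reindexAlgEquiv R R e.symm).toAlgHom A p

open Fin.NatCast

section cyclicP

variable {R : Type*} {n : ℕ} [NeZero n]

lemma cyclicP_apply [Semiring R] (i j : Fin n) :
    cyclicP R n i j = if i = j + 1 then 1 else 0 :=
  rfl

lemma cyclicP_pow [Semiring R] (k : ℕ) :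
    cyclicP R n ^ k = Matrix.of fun i j => if i = j + (k : Fin n) then 1 else 0 := by
  induction k with
  | zero => ext i j; simp [Matrix.one_apply]
  | succ k ih =>
    ext i j
    rw [pow_succ, ih, Matrix.mul_apply, Finset.sum_eq_single (j + 1)]
    · simp [cyclicP_apply, add_assoc, add_comm (1 : Fin n)]
    · intro l _ hl
      simp [cyclicP_apply, hl]
    · simp

lemma cyclicP_pow_self [Semiring R] : cyclicP R n ^ n = 1 := by
  ext i j
  simp [cyclicP_pow, Matrix.one_apply]

lemma aeval_cyclicP_modByMonic [CommRing R] (p : R[X]) :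
    aeval (cyclicP R n) (p %ₘ (X ^ n - 1)) = aeval (cyclicP R n) p :=
  aeval_modByMonic_eq_self_of_root (by simp [cyclicP_pow_self])

lemma cyclicP_pow_eq_submatrix [Semiring R] (u : (Fin n)ˣ) {k : ℕ} (hk : (k : Fin n) = u) :
    cyclicP R n ^ k = (cyclicP R n).submatrix u⁻¹.mulLeft u⁻¹.mulLeft := by
  ext i j
  simp only [cyclicP_pow, hk, Matrix.of_apply, Matrix.submatrix_apply, cyclicP_apply,
    Units.mulLeft_apply]
  congr 1
  rw [eq_iff_iff, ← (u⁻¹.mulLeft).injective.eq_iff]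
  simp [mul_add]

end cyclicP

section GB

variable {F : Type*} [Field F] {ℓ : ℕ} [NeZero ℓ] {k : ℕ}

lemma aeval_cyclicP_comp_X_pow_modByMonic (u : (Fin ℓ)ˣ) (hk : (k : Fin ℓ) = u) (p : F[X]) :
    aeval (cyclicP F ℓ) (p.comp (X ^ k) %ₘ (X ^ ℓ - 1)) =
      (aeval (cyclicP F ℓ) p).submatrix u⁻¹.mulLeft u⁻¹.mulLeft := by
  rw [aeval_cyclicP_modByMonic, aeval_comp, aeval_X_pow, cyclicP_pow_eq_submatrix u hk,
    Matrix.aeval_submatrix_equiv]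

lemma GBHX_comp_X_pow_modByMonic (u : (Fin ℓ)ˣ) (hk : (k : Fin ℓ) = u) (a b : F[X]) :
    GBHX F ℓ (a.comp (X ^ k) %ₘ (X ^ ℓ - 1)) (b.comp (X ^ k) %ₘ (X ^ ℓ - 1)) =
      (GBHX F ℓ a b).submatrix u⁻¹.mulLeft (u⁻¹.mulLeft.sumCongr u⁻¹.mulLeft) := by
  ext i (j | j) <;> simp [GBHX, aeval_cyclicP_comp_X_pow_modByMonic u hk]

lemma GBHZ_comp_X_pow_modByMonic (u : (Fin ℓ)ˣ) (hk : (k : Fin ℓ) = u) (a b : F[X]) :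
    GBHZ F ℓ (a.comp (X ^ k) %ₘ (X ^ ℓ - 1)) (b.comp (X ^ k) %ₘ (X ^ ℓ - 1)) =
      (GBHZ F ℓ a b).submatrix u⁻¹.mulLeft (u⁻¹.mulLeft.sumCongr u⁻¹.mulLeft) := by
  ext i (j | j) <;> simp [GBHZ, aeval_cyclicP_comp_X_pow_modByMonic u hk]

end GB

section CSS

variable {R : Type*} {q q' m₁ m₂ m₁' m₂' : Type*}

lemma hWt_comp_equiv [Zero R] (c : q → R) (f : q' ≃ q) : hWt (c ∘ f) = hWt c := by
  rw [hWt, hWt, ← Set.ncard_image_of_injective _ f.injective]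
  congr 1
  ext i
  simp

lemma Matrix.submatrix_mulVec_comp_eq_zero_iff [NonUnitalNonAssocSemiring R] [Fintype q]
    [Fintype q'] (H : Matrix m₁ q R) (e : m₁' ≃ m₁) (f : q' ≃ q) (c : q → R) :
    (H.submatrix e f).mulVec (c ∘ f) = 0 ↔ H.mulVec c = 0 := by
  rw [Matrix.submatrix_mulVec_equiv]
  simp [funext_iff, e.forall_congr_left, Function.comp_assoc]

lemma Matrix.comp_mem_span_rows_submatrix_iff [Semiring R] (H : Matrix m₁ q R) (e : m₁' ≃ m₁)
    (f : q' ≃ q) (c : q → R) :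
    c ∘ f ∈ Submodule.span R (Set.range fun i => (H.submatrix e f) i) ↔
      c ∈ Submodule.span R (Set.range fun i => H i) := by
  have hrows : (Set.range fun i => (H.submatrix e f) i) =
      LinearMap.funLeft R R f '' Set.range fun i => H i := by
    rw [← Set.range_comp, ← e.surjective.range_comp]
    rfl
  rw [hrows]
  exact Submodule.apply_mem_span_image_iff_mem_span
    (LinearMap.funLeft_injective_of_surjective _ _ _ f.surjective)

def logicalWeights [Semiring R] [Fintype q] (HX : Matrix m₁ q R) (HZ : Matrix m₂ q R) : Set ℕ :=
  {w | ∃ c : q → R, HX.mulVec c = 0 ∧ c ∉ Submodule.span R (Set.range fun i => HZ i) ∧ w = hWt c}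

lemma distCSS_eq_sInf_logicalWeights [Field R] [Fintype q] (HX : Matrix m₁ q R)
    (HZ : Matrix m₂ q R) :
    distCSS HX HZ = sInf (logicalWeights HX HZ ∪ logicalWeights HZ HX) :=
  rfl

lemma logicalWeights_submatrix [Semiring R] [Fintype q] [Fintype q'] (HX : Matrix m₁ q R)
    (HZ : Matrix m₂ q R) (e₁ : m₁' ≃ m₁) (e₂ : m₂' ≃ m₂) (f : q' ≃ q) :
    logicalWeights (HX.submatrix e₁ f) (HZ.submatrix e₂ f) = logicalWeights HX HZ := by
  ext w
  simp only [logicalWeights, Set.mem_ofPred_eq]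
  rw [(f.symm.arrowCongr (Equiv.refl R)).surjective.exists]
  refine exists_congr fun c => ?_
  have hc : f.symm.arrowCongr (Equiv.refl R) c = c ∘ f := rfl
  rw [hc, Matrix.submatrix_mulVec_comp_eq_zero_iff, Matrix.comp_mem_span_rows_submatrix_iff,
    hWt_comp_equiv]

lemma distCSS_submatrix [Field R] [Fintype q] [Fintype q'] (HX : Matrix m₁ q R)
    (HZ : Matrix m₂ q R) (e₁ : m₁' ≃ m₁) (e₂ : m₂' ≃ m₂) (f : q' ≃ q) :
    distCSS (HX.submatrix e₁ f) (HZ.submatrix e₂ f) = distCSS HX HZ := by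
  rw [distCSS_eq_sInf_logicalWeights, distCSS_eq_sInf_logicalWeights, logicalWeights_submatrix,
    logicalWeights_submatrix]

end CSS

theorem stmt_14_general (F : Type*) [Field F] (ℓ : ℕ) [NeZero ℓ] (m : ℕ)
    (hm : Nat.Coprime m ℓ) (a b a' b' : Polynomial F)
    (ha' : a' = (a.comp (X ^ m)) %ₘ ((X : Polynomial F) ^ ℓ - 1))
    (hb' : b' = (b.comp (X ^ m)) %ₘ ((X : Polynomial F) ^ ℓ - 1)) :
    (∃ σ : (Polynomial F ⧸ Ideal.span {(X : Polynomial F) ^ ℓ - 1}) ≃+*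
        (Polynomial F ⧸ Ideal.span {(X : Polynomial F) ^ ℓ - 1}),
      ∀ p : Polynomial F,
        σ (Ideal.Quotient.mk (Ideal.span {(X : Polynomial F) ^ ℓ - 1}) p) =
          Ideal.Quotient.mk (Ideal.span {(X : Polynomial F) ^ ℓ - 1}) (p.comp (X ^ m))) ∧
    gbDim F ℓ a b = gbDim F ℓ a' b' ∧ gbDist F ℓ a b = gbDist F ℓ a' b' := by
  obtain ⟨m', hmm'⟩ := Nat.exists_mul_modEq_one_of_coprime hm (NeZero.ne ℓ)
  have hunit : (m : Fin ℓ) * m' = 1 := Fin.ext <| by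
    rw [Fin.val_mul, Fin.val_natCast, Fin.val_natCast, ← Nat.mul_mod]
    simpa [Nat.ModEq] using hmm'
  set u := Units.mkOfMulEqOne _ _ hunit
  have hu : (m : Fin ℓ) = u := rfl
  subst ha' hb'
  refine ⟨⟨(AdjoinRoot.powSubstEquiv ℓ hmm').toRingEquiv, AdjoinRoot.powSubst_mk ℓ m⟩, ?_, ?_⟩
  · rw [gbDim, gbDim, GBHX_comp_X_pow_modByMonic u hu, GBHZ_comp_X_pow_modByMonic u hu,
      Matrix.rank_submatrix, Matrix.rank_submatrix]
  · rw [gbDist, gbDist, GBHX_comp_X_pow_modByMonic u hu, GBHZ_comp_X_pow_modByMonic u hu,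
      distCSS_submatrix]

/-- For `m` coprime to `ℓ`, the substitution `x ↦ x^m` induces a ring automorphism of
`F_q[x]/(x^ℓ - 1)`; consequently `GB(a,b)` and `GB(a(x^m), b(x^m))` (reduced mod
`x^ℓ - 1`) have equal dimension and equal minimum distance. -/
theorem stmt_14 (F : Type*) [Field F] [Fintype F] (ℓ : ℕ) [NeZero ℓ] (m : ℕ)
    (hm : Nat.Coprime m ℓ) (a b a' b' : Polynomial F)
    (ha' : a' = (a.comp (X ^ m)) %ₘ ((X : Polynomial F) ^ ℓ - 1))
    (hb' : b' = (b.comp (X ^ m)) %ₘ ((X : Polynomial F) ^ ℓ - 1)) :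
    (∃ σ : (Polynomial F ⧸ Ideal.span {(X : Polynomial F) ^ ℓ - 1}) ≃+*
        (Polynomial F ⧸ Ideal.span {(X : Polynomial F) ^ ℓ - 1}),
      ∀ p : Polynomial F,
        σ (Ideal.Quotient.mk (Ideal.span {(X : Polynomial F) ^ ℓ - 1}) p) =
          Ideal.Quotient.mk (Ideal.span {(X : Polynomial F) ^ ℓ - 1}) (p.comp (X ^ m))) ∧
    gbDim F ℓ a b = gbDim F ℓ a' b' ∧ gbDist F ℓ a b = gbDist F ℓ a' b' :=
  stmt_14_general F ℓ m hm a b a' b' ha' hb'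
end

section
/- Let h(x) = gcd(a, b, x^ℓ - 1), a_1 = a/gcd(a,b), b_1 = b/gcd(a,b). Every solution [u(x), v(x)] of a(x)u(x) + b(x)v(x) ≡ 0 mod (x^ℓ - 1) can be written as u = α·g·r_1 + β·b_1, v = α·g·s_1 − β·a_1 (mod x^ℓ−1) for some polynomials α, β, where g(x) = (x^ℓ-1)/h(x) and r_1, s_1 are Bézout coefficients with a_1 r_1 + b_1 s_1 = 1. -/
open Polynomial
open scoped Classical

/-- General solution of `a·u + b·v ≡ 0 (mod x^ℓ - 1)`: with `χ = gcd(a,b)`, `a = χ·a₁`,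
`b = χ·b₁`, `h = gcd(χ, x^ℓ-1)`, `g·h = x^ℓ-1` and Bézout coefficients
`a₁ r₁ + b₁ s₁ = 1`, every solution `[u, v]` can be written as
`u ≡ α g r₁ + β b₁`, `v ≡ α g s₁ − β a₁ (mod x^ℓ − 1)`. -/
theorem stmt_17 (F : Type*) [Field F] [Fintype F] (ℓ : ℕ) (hℓ : 0 < ℓ)
    (a b χ a1 b1 g h r1 s1 : Polynomial F)
    (hχ : χ = EuclideanDomain.gcd a b) (ha : a = χ * a1) (hb : b = χ * b1)
    (hh : h = EuclideanDomain.gcd χ ((X : Polynomial F) ^ ℓ - 1))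
    (hg : g * h = (X : Polynomial F) ^ ℓ - 1)
    (hbez : a1 * r1 + b1 * s1 = 1) :
    ∀ u v : Polynomial F, ((X : Polynomial F) ^ ℓ - 1) ∣ (a * u + b * v) →
      ∃ α β : Polynomial F,
        ((X : Polynomial F) ^ ℓ - 1) ∣ (u - (α * g * r1 + β * b1)) ∧
        ((X : Polynomial F) ^ ℓ - 1) ∣ (v - (α * g * s1 - β * a1)) := by
  intro u v hdvd
  set n : Polynomial F := X ^ ℓ - 1 with hn
  have hn0 : n ≠ 0 := by
    have := Polynomial.X_pow_sub_C_ne_zero hℓ (1 : F)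
    simpa [hn] using this
  have hh0 : h ≠ 0 := by
    rw [hh]
    intro hc
    rw [EuclideanDomain.gcd_eq_zero_iff] at hc
    exact hn0 hc.2
  have hdvd' : n ∣ χ * (a1 * u + b1 * v) := by
    have heq : a * u + b * v = χ * (a1 * u + b1 * v) := by rw [ha, hb]; ring
    rwa [heq] at hdvd
  obtain ⟨t, ht⟩ := hdvd'
  set p := EuclideanDomain.gcdA χ n with hp
  set q := EuclideanDomain.gcdB χ n with hq
  have hbz : h = χ * p + n * q := by
    rw [hh, hp, hq]; exact EuclideanDomain.gcd_eq_gcd_ab χ n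
  set w := a1 * u + b1 * v with hw
  set α := p * t + q * w with hα
  have key : h * w = h * (g * α) := by
    have : χ * w = n * t := ht
    calc h * w = (χ * p + n * q) * w := by rw [← hbz]
      _ = (χ * w) * p + n * (q * w) := by ring
      _ = (n * t) * p + n * (q * w) := by rw [this]
      _ = n * α := by rw [hα]; ring
      _ = (g * h) * α := by rw [hg]
      _ = h * (g * α) := by ring
  have hgw : α * g = a1 * u + b1 * v := by
    have h3 := mul_left_cancel₀ hh0 key
    rw [hw] at h3
    linear_combination -h3
  refine ⟨α, s1 * u - r1 * v, ?_, ?_⟩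
  · have h1 : u - (α * g * r1 + (s1 * u - r1 * v) * b1) = 0 := by
      linear_combination (-r1) * hgw - u * hbez
    rw [h1]; exact dvd_zero _
  · have h2 : v - (α * g * s1 - (s1 * u - r1 * v) * a1) = 0 := by
      linear_combination (-s1) * hgw - v * hbez
    rw [h2]; exact dvd_zero _
end
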